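/- arXiv:1905.06813 — 2 statements merged into one kernel-verified Lean document; each statement's English description precedes it below -/
import Mathlib

section
/- Let n be a positive integer, λ = (p_1,…,p_k) a partition of n, f : {1,…,n} → {1,…,k} the map with f(s) = i exactly when p_1+⋯+p_{i−1} < s ≤ p_1+⋯+p_i, and G = {φ ∈ S_n : f∘φ = f}. For τ, σ ∈ S_n define v_f(τ,σ) := ∏ q_{f(τ(i)),f(τ(j))}, the product over pairs (i,j) with 1 ≤ i < j ≤ n and σ⁻¹(τ(i)) > σ⁻¹(τ(j)), in the polynomial ring ℤ[q_{a,b} : a,b ∈ {1,…,k}]. Then for all σ, τ ∈ S_n and every υ ∈ G: Σ_{φ ∈ G} v_f(φ∘τ, υ∘σ) = Σ_{φ ∈ G} v_f(φ∘τ, σ). -/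
/-- The polynomial ring `R_k = ℤ[q_{a,b} : a,b ∈ {1,…,k}]`. -/
abbrev Rk (k : ℕ) : Type := MvPolynomial (Fin k × Fin k) ℤ

/-- `v_f(τ,σ)`: the product of `q_{f(τ(i)),f(τ(j))}` over the pairs `i < j`
with `σ⁻¹(τ(i)) > σ⁻¹(τ(j))`. -/
noncomputable def vf {n k : ℕ} (f : Fin n → Fin k) (τ σ : Equiv.Perm (Fin n)) :
    Rk k :=
  ∏ p ∈ Finset.univ.filter
      (fun p : Fin n × Fin n => p.1 < p.2 ∧ σ⁻¹ (τ p.2) < σ⁻¹ (τ p.1)),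
    MvPolynomial.X (f (τ p.1), f (τ p.2))

/-- The Young subgroup `G = {φ ∈ S_n : f ∘ φ = f}` (as a finset). -/
def youngG {n k : ℕ} (f : Fin n → Fin k) : Finset (Equiv.Perm (Fin n)) :=
  Finset.univ.filter fun φ => f ∘ ⇑φ = f

/-! Because `f ∘ υ⁻¹ = f`, replacing `σ` by `υ * σ` in `v_f(τ, σ)` is the same as replacing `τ`
by `υ⁻¹ * τ`; and left multiplication by `υ⁻¹` permutes `G`, so the two coset sums are
reindexings of each other. -/

open Equiv Finset

section

variable {n k : ℕ} {f : Fin n → Fin k}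

lemma mem_youngG {φ : Perm (Fin n)} : φ ∈ youngG f ↔ ∀ x, f (φ x) = f x := by
  simp [youngG, funext_iff]

lemma inv_mem_youngG {υ : Perm (Fin n)} (hυ : υ ∈ youngG f) : υ⁻¹ ∈ youngG f :=
  mem_youngG.2 fun x => by simpa using (mem_youngG.1 hυ (υ⁻¹ x)).symm

lemma mul_mem_youngG {υ φ : Perm (Fin n)} (hυ : υ ∈ youngG f) (hφ : φ ∈ youngG f) :
    υ * φ ∈ youngG f :=
  mem_youngG.2 fun x => by rw [Perm.mul_apply, mem_youngG.1 hυ, mem_youngG.1 hφ]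

lemma sum_youngG_mul_left {M : Type*} [AddCommMonoid M] {υ : Perm (Fin n)}
    (hυ : υ ∈ youngG f) (g : Perm (Fin n) → M) :
    ∑ φ ∈ youngG f, g (υ * φ) = ∑ φ ∈ youngG f, g φ :=
  sum_nbij' (υ * ·) (υ⁻¹ * ·) (fun _ hφ => mul_mem_youngG hυ hφ)
    (fun _ hφ => mul_mem_youngG (inv_mem_youngG hυ) hφ)
    (fun _ _ => inv_mul_cancel_left υ _) (fun _ _ => mul_inv_cancel_left υ _) fun _ _ => rfl

lemma vf_mul_left {υ : Perm (Fin n)} (hυ : υ ∈ youngG f) (τ σ : Perm (Fin n)) :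
    vf f τ (υ * σ) = vf f (υ⁻¹ * τ) σ := by
  have hf : ∀ x, f (υ⁻¹ x) = f x := mem_youngG.1 (inv_mem_youngG hυ)
  simp only [vf, mul_inv_rev, Perm.mul_apply, hf]
  -- the two filters agree up to their `Decidable` instances
  rfl

end

theorem coset_sum_vf_invariant_general (n k : ℕ)
    (f : Fin n → Fin k)
    (σ τ : Equiv.Perm (Fin n)) (υ : Equiv.Perm (Fin n)) (hυ : υ ∈ youngG f) :
    ∑ φ ∈ youngG f, vf f (φ * τ) (υ * σ) = ∑ φ ∈ youngG f, vf f (φ * τ) σ := by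
  calc ∑ φ ∈ youngG f, vf f (φ * τ) (υ * σ)
      = ∑ φ ∈ youngG f, vf f (υ⁻¹ * φ * τ) σ :=
        sum_congr rfl fun φ _ => by rw [vf_mul_left hυ, mul_assoc]
    _ = ∑ φ ∈ youngG f, vf f (φ * τ) σ :=
        sum_youngG_mul_left (inv_mem_youngG hυ) fun φ => vf f (φ * τ) σ

theorem coset_sum_vf_invariant (n k : ℕ) (hn : 0 < n)
    (p : Fin k → ℕ) (hpos : ∀ i, 0 < p i)
    (hmono : ∀ i j : Fin k, i ≤ j → p j ≤ p i) (hsum : ∑ i, p i = n)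
    (f : Fin n → Fin k)
    (hf : ∀ (s : Fin n) (i : Fin k),
      f s = i ↔ ∑ j ∈ Finset.Iio i, p j ≤ (s : ℕ) ∧
        (s : ℕ) < ∑ j ∈ Finset.Iic i, p j)
    (σ τ : Equiv.Perm (Fin n)) (υ : Equiv.Perm (Fin n)) (hυ : υ ∈ youngG f) :
    ∑ φ ∈ youngG f, vf f (φ * τ) (υ * σ) = ∑ φ ∈ youngG f, vf f (φ * τ) σ :=
  coset_sum_vf_invariant_general n k f σ τ υ hυ
end

section
/- Let n be a positive integer and σ, τ permutations of {1,…,n}. Then in the multiparametric quon algebra A, a_{σ(n)}⋯a_{σ(1)} · a†_{τ(1)}⋯a†_{τ(n)} − v_n(σ,τ)·1 belongs to L + Rt, where v_n(σ,τ) := ∏ q_{σ(i),σ(j)}, the product over all pairs (i,j) with 1 ≤ i < j ≤ n and τ⁻¹(σ(i)) > τ⁻¹(σ(j)). (Equivalently, ⟨0| a_{σ(n)}⋯a_{σ(1)} a†_{τ(1)}⋯a†_{τ(n)} |0⟩ = v_n(σ,τ).) -/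
/-!
Commuting an annihilator `a_i` to the right through a word of distinct creators by
`a_i a_j† = q_{i,j} a_j† a_i + δ_{i,j}` produces a multiple of the word followed by `a_i`, which
lies in `L`, plus the single contraction of `a_i` with `a_i†`, weighted by the `q_{i,j}` of the
creators `a_j†` standing to the left of `a_i†`. Contracting `a_{σ(1)}, a_{σ(2)}, …` in turn, the
creators passed by `a_{σ(k)}` are exactly the `a_{σ(l)}†` with `k < l` that `τ` lists before
`σ(k)`, i.e. the inversions of `τ⁻¹ σ`; when all annihilators are used up only `v_n(σ,τ)·1`
remains. In particular the difference lies already in `L`.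
-/

/-- The coefficient ring `R = ℂ[q_{i,j} : i,j ∈ ℕ⁺]`. -/
abbrev QR : Type := MvPolynomial (ℕ+ × ℕ+) ℂ

/-- The quon relations `a_i a_j† = q_{i,j} a_j† a_i + δ_{i,j}` on the free
`R`-algebra on the symbols `a_i` (`Sum.inl i`) and `a_i†` (`Sum.inr i`). -/
inductive QuonRel : FreeAlgebra QR (ℕ+ ⊕ ℕ+) → FreeAlgebra QR (ℕ+ ⊕ ℕ+) → Prop
  | rel (i j : ℕ+) : QuonRel
      (FreeAlgebra.ι QR (Sum.inl i) * FreeAlgebra.ι QR (Sum.inr j))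
      ((MvPolynomial.X (i, j) : QR) •
          (FreeAlgebra.ι QR (Sum.inr j) * FreeAlgebra.ι QR (Sum.inl i))
        + if i = j then 1 else 0)

/-- The multiparametric quon algebra `A`. -/
abbrev QuonAlg : Type := RingQuot QuonRel

/-- The annihilation operator `a_i`. -/
noncomputable def ann (i : ℕ+) : QuonAlg :=
  RingQuot.mkAlgHom QR QuonRel (FreeAlgebra.ι QR (Sum.inl i))

/-- The creation operator `a_i†`. -/
noncomputable def cre (i : ℕ+) : QuonAlg :=
  RingQuot.mkAlgHom QR QuonRel (FreeAlgebra.ι QR (Sum.inr i))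

/-- The left ideal `L = Σ_i A·a_i`, as an `R`-submodule of `A`. -/
noncomputable def leftIdeal : Submodule QR QuonAlg :=
  Submodule.span QR {x : QuonAlg | ∃ y : QuonAlg, ∃ i : ℕ+, x = y * ann i}

/-- The right ideal `Rt = Σ_j a_j†·A`, as an `R`-submodule of `A`. -/
noncomputable def rightIdeal : Submodule QR QuonAlg :=
  Submodule.span QR {x : QuonAlg | ∃ y : QuonAlg, ∃ j : ℕ+, x = cre j * y}


open Function

namespace List

variable {α : Type*}

theorem pair_sublist_ofFn_iff {n : ℕ} {h : Fin n → α} (hh : Injective h) {a b : Fin n} :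
    [h a, h b] <+ ofFn h ↔ a < b := by
  rw [ofFn_eq_map, show [h a, h b] = [a, b].map h from rfl, sublist_map_iff]
  constructor
  · rintro ⟨l, hl, hab⟩
    rw [← map_injective_iff.2 hh hab] at hl
    simpa using (pairwise_lt_finRange n).sublist hl
  · intro hab
    refine ⟨[a, b], sublist_of_subperm_of_pairwise (r := (· < ·)) ?_ (by simpa using hab)
      (pairwise_lt_finRange n), rfl⟩
    exact subperm_of_subset (by simpa using hab.ne) (by simp)

theorem pair_sublist_append_cons_iff {i y : α} {l₁ l₂ : List α} (h₁ : i ∉ l₁) (h₂ : i ∉ l₂) :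
    [y, i] <+ l₁ ++ i :: l₂ ↔ y ∈ l₁ := by
  refine ⟨fun h => ?_, fun h => (singleton_sublist.2 h).append (by simp)⟩
  obtain ⟨s₁, s₂, hs, hs₁, hs₂⟩ := sublist_append_iff.1 h
  match s₁, s₂, hs with
  | [], _, rfl =>
    rcases sublist_cons_iff.1 hs₂ with h | ⟨r, hr, h⟩
    · exact absurd (h.subset (by simp)) h₂
    · obtain ⟨-, rfl⟩ := cons_eq_cons.1 hr
      exact absurd (h.subset (by simp)) h₂
  | [_], _, rfl => simpa using hs₁
  | [_, _], [], rfl => exact absurd (hs₁.subset (by simp)) h₁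

theorem sublist_append_cons_iff_of_notMem [DecidableEq α] {i : α} {s l₁ l₂ : List α}
    (hs : i ∉ s) (h₁ : i ∉ l₁) :
    s <+ l₁ ++ i :: l₂ ↔ s <+ l₁ ++ l₂ := by
  refine ⟨fun h => ?_, fun h => h.trans ((sublist_cons_self i l₂).append_left l₁)⟩
  simpa [erase_of_not_mem hs, erase_append_right _ h₁] using h.erase i

end List

open List

noncomputable def qProd (i : ℕ+) (l : List ℕ+) : QR :=
  (l.map fun j => MvPolynomial.X (i, j)).prod

@[simp] theorem qProd_nil (i : ℕ+) : qProd i [] = 1 := rfl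

@[simp] theorem qProd_cons (i j : ℕ+) (l : List ℕ+) :
    qProd i (j :: l) = MvPolynomial.X (i, j) * qProd i l := by
  simp [qProd]

@[simp] theorem qProd_append (i : ℕ+) (l₁ l₂ : List ℕ+) :
    qProd i (l₁ ++ l₂) = qProd i l₁ * qProd i l₂ := by
  simp [qProd]

/-- For `g = σ` and `js = τ` this is `v_n(σ, τ)`. -/
noncomputable def inversionCoeff {n : ℕ} (g : Fin n → ℕ+) (js : List ℕ+) : QR :=
  ∏ p ∈ Finset.univ.filter (fun p : Fin n × Fin n => p.1 < p.2 ∧ [g p.2, g p.1] <+ js),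
    MvPolynomial.X (g p.1, g p.2)

theorem inversionCoeff_cons {n : ℕ} {i : ℕ+} {g : Fin n → ℕ+} {l₁ l₂ : List ℕ+}
    (hnd : (l₁ ++ i :: l₂).Nodup) (hperm : ofFn g ~ l₁ ++ l₂) :
    inversionCoeff (Fin.cons i g : Fin (n + 1) → ℕ+) (l₁ ++ i :: l₂)
      = qProd i l₁ * inversionCoeff g (l₁ ++ l₂) := by
  obtain ⟨hi, hnd'⟩ := nodup_cons.1 (nodup_middle.1 hnd)
  have hi₁ : i ∉ l₁ := fun h => hi (mem_append_left _ h)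
  have hi₂ : i ∉ l₂ := fun h => hi (mem_append_right _ h)
  have hig : ∀ u, i ≠ g u := fun u h => hi (hperm.subset (mem_ofFn.2 ⟨u, h.symm⟩))
  have hg : Injective g := nodup_ofFn.1 (hperm.nodup_iff.2 hnd')
  have hfirst : (∏ v : Fin n, if g v ∈ l₁ then MvPolynomial.X (i, g v) else 1) = qProd i l₁ := by
    have hsub : l₁.toFinset ⊆ Finset.univ.image g := fun y hy => by
      obtain ⟨u, rfl⟩ := mem_ofFn.1 (hperm.symm.subset (mem_append_left _ (mem_toFinset.1 hy)))
      exact Finset.mem_image_of_mem g (Finset.mem_univ u)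
    rw [qProd, ← prod_toFinset _ ((nodup_append.1 hnd').1), ← Finset.inter_eq_right.2 hsub,
      ← Finset.prod_ite_mem, Finset.prod_image (fun u _ v _ h => hg h)]
    simp
  simp only [inversionCoeff, Finset.prod_filter, Fintype.prod_prod_type, Fin.prod_univ_succ,
    Fin.cons_zero, Fin.cons_succ, false_and, if_false, one_mul,
    Fin.succ_pos, true_and, not_lt_zero, Fin.succ_lt_succ_iff,
    pair_sublist_append_cons_iff hi₁ hi₂, hfirst]
  congr 1
  refine Fintype.prod_congr _ _ fun u => Fintype.prod_congr _ _ fun v => ?_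
  exact if_congr (and_congr_right fun _ => sublist_append_cons_iff_of_notMem (by simp [hig]) hi₁)
    rfl rfl

theorem inversionCoeff_comp_perm {n : ℕ} {h : Fin n → ℕ+} (hh : Injective h)
    (π : Equiv.Perm (Fin n)) :
    inversionCoeff (h ∘ π) (ofFn h)
      = ∏ p ∈ Finset.univ.filter (fun p : Fin n × Fin n => p.1 < p.2 ∧ π p.2 < π p.1),
          MvPolynomial.X (h (π p.1), h (π p.2)) := by
  refine Finset.prod_congr (Finset.filter_congr fun p _ => ?_) fun _ _ => rfl
  rw [comp_apply, comp_apply, pair_sublist_ofFn_iff hh]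

theorem ann_mul_cre (i j : ℕ+) :
    ann i * cre j = (MvPolynomial.X (i, j) : QR) • (cre j * ann i)
      + if i = j then 1 else 0 := by
  have h := RingQuot.mkAlgHom_rel QR (QuonRel.rel i j)
  simp only [map_mul, map_add, map_smul, apply_ite (RingQuot.mkAlgHom QR QuonRel),
    map_one, map_zero] at h
  exact h

theorem ann_mul_creProd_of_notMem {i : ℕ+} {js : List ℕ+} (h : i ∉ js) :
    ann i * (js.map cre).prod = qProd i js • ((js.map cre).prod * ann i) := by
  induction js with
  | nil => simp
  | cons j js ih =>
    obtain ⟨hij, hjs⟩ := not_or.1 (mem_cons.not.1 h)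
    rw [map_cons, prod_cons, ← mul_assoc, ann_mul_cre, if_neg hij, add_zero, smul_mul_assoc,
      mul_assoc, ih hjs, mul_smul_comm, smul_smul, qProd_cons, mul_assoc]

theorem ann_mul_creProd_append_cons {i : ℕ+} {l₁ l₂ : List ℕ+} (h₁ : i ∉ l₁) (h₂ : i ∉ l₂) :
    ann i * ((l₁ ++ i :: l₂).map cre).prod
      = qProd i l₁ • ((l₁ ++ l₂).map cre).prod
        + qProd i (l₁ ++ i :: l₂) • (((l₁ ++ i :: l₂).map cre).prod * ann i) := by
  simp only [map_append, map_cons, prod_append, prod_cons, qProd_append, qProd_cons]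
  rw [← mul_assoc, ann_mul_creProd_of_notMem h₁, smul_mul_assoc, mul_assoc, ← mul_assoc (ann i),
    ann_mul_cre, if_pos rfl, add_mul, one_mul, smul_mul_assoc, mul_assoc,
    ann_mul_creProd_of_notMem h₂]
  simp only [mul_add, smul_add, mul_smul_comm, smul_smul, mul_assoc]
  rw [add_comm]

theorem mul_mem_leftIdeal (x : QuonAlg) {y : QuonAlg} (hy : y ∈ leftIdeal) :
    x * y ∈ leftIdeal := by
  induction hy using Submodule.span_induction with
  | mem y hy =>
    obtain ⟨z, i, rfl⟩ := hy
    exact Submodule.subset_span ⟨x * z, i, (mul_assoc _ _ _).symm⟩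
  | zero => simp
  | add y z _ _ hy hz => simpa [mul_add] using add_mem hy hz
  | smul r y _ hy => simpa [mul_smul_comm] using Submodule.smul_mem _ r hy

theorem mul_ann_mem_leftIdeal (y : QuonAlg) (i : ℕ+) : y * ann i ∈ leftIdeal :=
  Submodule.subset_span ⟨y, i, rfl⟩

theorem braket_sub_inversionCoeff_mem_leftIdeal {n : ℕ} (g : Fin n → ℕ+) (hg : Injective g)
    (js : List ℕ+) (hperm : ofFn g ~ js) :
    (ofFn fun u => ann (g u)).reverse.prod * (js.map cre).prod - inversionCoeff g js • 1
      ∈ leftIdeal := by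
  induction n generalizing js with
  | zero =>
    obtain rfl : js = [] := by simpa using hperm.symm
    simpa [inversionCoeff] using (sub_self (1 : QuonAlg)).symm ▸ zero_mem _
  | succ n ih =>
    obtain ⟨i, g, rfl⟩ : ∃ i g', g = Fin.cons i g' :=
      ⟨g 0, Fin.tail g, (Fin.cons_self_tail g).symm⟩
    have hnd := hperm.nodup_iff.1 (nodup_ofFn.2 hg)
    rw [ofFn_cons] at hperm
    obtain ⟨l₁, l₂, rfl⟩ := append_of_mem (hperm.subset mem_cons_self)
    obtain ⟨hi, -⟩ := nodup_cons.1 (nodup_middle.1 hnd)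
    have hperm' : ofFn g ~ l₁ ++ l₂ := (hperm.trans perm_middle).cons_inv
    have hind := ih g (Fin.cons_injective_iff.1 hg).2 _ hperm'
    set P := (ofFn fun u => ann (g u)).reverse.prod
    have hrev : (ofFn fun u => ann ((Fin.cons i g : Fin (n + 1) → ℕ+) u)).reverse.prod
        = P * ann i := by
      simp [ofFn_succ, P]
    rw [hrev, mul_assoc, ann_mul_creProd_append_cons (fun h => hi (mem_append_left _ h))
      (fun h => hi (mem_append_right _ h)), inversionCoeff_cons hnd hperm']
    convert add_mem (Submodule.smul_mem _ (qProd i l₁) hind)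
      (mul_mem_leftIdeal P (Submodule.smul_mem _ (qProd i (l₁ ++ i :: l₂))
        (mul_ann_mem_leftIdeal ((l₁ ++ i :: l₂).map cre).prod i))) using 1
    rw [mul_add, mul_smul_comm, mul_smul_comm]
    module

theorem braket_eq_vn_general (n : ℕ) (σ τ : Equiv.Perm (Fin n)) :
    (List.ofFn fun u : Fin n => ann ((σ u : ℕ).succPNat)).reverse.prod *
        (List.ofFn fun u : Fin n => cre ((τ u : ℕ).succPNat)).prod
      - (∏ p ∈ Finset.univ.filter
            (fun p : Fin n × Fin n => p.1 < p.2 ∧ τ⁻¹ (σ p.2) < τ⁻¹ (σ p.1)),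
          (MvPolynomial.X ((σ p.1 : ℕ).succPNat, (σ p.2 : ℕ).succPNat) : QR)) •
        (1 : QuonAlg)
      ∈ leftIdeal ⊔ rightIdeal := by
  set h : Fin n → ℕ+ := fun u => (τ u : ℕ).succPNat
  have hh : Injective h := Nat.succPNat_injective.comp (Fin.val_injective.comp τ.injective)
  have key := braket_sub_inversionCoeff_mem_leftIdeal (h ∘ ⇑(τ⁻¹ * σ))
    (hh.comp (τ⁻¹ * σ).injective) (ofFn h) ((τ⁻¹ * σ).ofFn_comp_perm h)
  rw [inversionCoeff_comp_perm hh, map_ofFn] at key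
  have hτ : ∀ u, τ (τ⁻¹ u) = u := τ.apply_symm_apply
  simp only [h, comp_def, Equiv.Perm.mul_apply, hτ] at key
  exact Submodule.mem_sup_left key

/-- `⟨0| a_{σ(n)}⋯a_{σ(1)} a†_{τ(1)}⋯a†_{τ(n)} |0⟩ = v_n(σ,τ)`, i.e.
`a_{σ(n)}⋯a_{σ(1)}·a†_{τ(1)}⋯a†_{τ(n)} − v_n(σ,τ)·1 ∈ L + Rt`, where the
element `u ∈ {1,…,n}` is identified with the positive integer `u`. -/
theorem braket_eq_vn (n : ℕ) (hn : 0 < n) (σ τ : Equiv.Perm (Fin n)) :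
    (List.ofFn fun u : Fin n => ann ((σ u : ℕ).succPNat)).reverse.prod *
        (List.ofFn fun u : Fin n => cre ((τ u : ℕ).succPNat)).prod
      - (∏ p ∈ Finset.univ.filter
            (fun p : Fin n × Fin n => p.1 < p.2 ∧ τ⁻¹ (σ p.2) < τ⁻¹ (σ p.1)),
          (MvPolynomial.X ((σ p.1 : ℕ).succPNat, (σ p.2 : ℕ).succPNat) : QR)) •
        (1 : QuonAlg)
      ∈ leftIdeal ⊔ rightIdeal :=
  braket_eq_vn_general n σ τ
end
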